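/- arXiv:2202.05455 — 3 statements merged into one kernel-verified Lean document; each statement's English description precedes it below -/
import Mathlib

section
/- With z = v/(1+3v+v^2), define A_h(z) = z(1+v) * ((1+2v)^{h-1} - v^h (v+2)^{h-1}) / ((1+2v)^{h-1} - v^{h+1} (v+2)^{h-1}). Then A_1 = z and A_{h+1} = -z + z(2-z)/(1 - A_h) for all h ≥ 1. -/
/-!
Write `P = (1+2v)^{h-1}` and `R = (v(v+2))^{h-1}`, so that `A_h = z(1+v)(P - vR)/(P - v²R)`.
Passing from `h` to `h+1` multiplies `P` by `1+2v` and `R` by `v(v+2)`, and the recursion is the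
single rational identity saying that this substitution acts on `A_h` as `A ↦ -z + z(2-z)/(1-A)`.
The same computation gives `1 - A_h = D_{h+1}/((1+3v+v²) D_h)` for the denominators `D_h`, so
`1 - A_h` never vanishes.
-/

section HeightRecursion

variable {K : Type*} [Field K] {v z : K}

def heightGF (v z P R : K) : K :=
  z * (1 + v) * (P - v * R) / (P - v ^ 2 * R)

theorem heightGF_pow (v z : K) (k : ℕ) :
    heightGF v z ((1 + 2 * v) ^ k) ((v * (v + 2)) ^ k) =
      z * (1 + v) * ((1 + 2 * v) ^ k - v ^ (k + 1) * (v + 2) ^ k) /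
        ((1 + 2 * v) ^ k - v ^ (k + 1 + 1) * (v + 2) ^ k) := by
  rw [heightGF, mul_pow]
  ring

theorem heightGF_one_one (hv : 1 - v ^ 2 ≠ 0) : heightGF v z 1 1 = z := by
  rw [heightGF, div_eq_iff (by simpa using hv)]
  ring

theorem one_sub_heightGF_mul (hz : z * (1 + 3 * v + v ^ 2) = v) {P R : K}
    (hD : P - v ^ 2 * R ≠ 0) :
    (1 - heightGF v z P R) * ((1 + 3 * v + v ^ 2) * (P - v ^ 2 * R)) =
      (1 + 2 * v) * P - v ^ 2 * (v * (v + 2) * R) := by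
  rw [heightGF, one_sub_div hD, mul_left_comm, div_mul_cancel₀ _ hD]
  linear_combination (-(1 + v) * (P - v * R)) * hz

theorem heightGF_step (hz : z * (1 + 3 * v + v ^ 2) = v) (hd : 1 + 3 * v + v ^ 2 ≠ 0)
    {P R : K} (hD : P - v ^ 2 * R ≠ 0)
    (hD' : (1 + 2 * v) * P - v ^ 2 * (v * (v + 2) * R) ≠ 0) :
    heightGF v z ((1 + 2 * v) * P) (v * (v + 2) * R) =
      -z + z * (2 - z) / (1 - heightGF v z P R) := by
  rw [eq_div_of_mul_eq (mul_ne_zero hd hD) (one_sub_heightGF_mul hz hD), div_div_eq_mul_div,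
    eq_neg_add_iff_add_eq, heightGF, add_div' _ _ _ hD', div_left_inj' hD']
  linear_combination (z * (P - v ^ 2 * R)) * hz

end HeightRecursion

theorem stmt6_general {K : Type*} [Field K] (v z : K) (A : ℕ → K)
    (hd : 1 + 3 * v + v ^ 2 ≠ 0)
    (hz : z = v / (1 + 3 * v + v ^ 2))
    (hA : ∀ h, 1 ≤ h → A h =
      z * (1 + v) * ((1 + 2 * v) ^ (h - 1) - v ^ h * (v + 2) ^ (h - 1)) /
        ((1 + 2 * v) ^ (h - 1) - v ^ (h + 1) * (v + 2) ^ (h - 1)))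
    (hden : ∀ h, 1 ≤ h → (1 + 2 * v) ^ (h - 1) - v ^ (h + 1) * (v + 2) ^ (h - 1) ≠ 0) :
    A 1 = z ∧ ∀ h, 1 ≤ h → A (h + 1) = -z + z * (2 - z) / (1 - A h) := by
  have hz' : z * (1 + 3 * v + v ^ 2) = v := by rw [hz, div_mul_cancel₀ _ hd]
  have hA' (k : ℕ) : A (k + 1) = heightGF v z ((1 + 2 * v) ^ k) ((v * (v + 2)) ^ k) := by
    simpa [heightGF_pow] using hA (k + 1) (Nat.le_add_left 1 k)
  have hden' (k : ℕ) : (1 + 2 * v) ^ k - v ^ 2 * (v * (v + 2)) ^ k ≠ 0 := by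
    convert hden (k + 1) (Nat.le_add_left 1 k) using 1
    rw [Nat.add_sub_cancel, mul_pow]
    ring
  refine ⟨?_, fun h hh => ?_⟩
  · simpa [hA' 0] using heightGF_one_one (by simpa using hden' 0)
  · obtain ⟨k, rfl⟩ := Nat.exists_eq_add_of_le' hh
    rw [hA', hA', pow_succ', pow_succ']
    refine heightGF_step hz' hd (hden' k) ?_
    convert hden' (k + 1) using 1
    ring

/-- With `z = v/(1+3v+v²)`, the explicit rational expressions
`A_h = z(1+v)((1+2v)^{h-1} - v^h(v+2)^{h-1})/((1+2v)^{h-1} - v^{h+1}(v+2)^{h-1})`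
satisfy `A₁ = z` and the recursion `A_{h+1} = -z + z(2-z)/(1-A_h)` for `h ≥ 1`. -/
theorem stmt6 {K : Type*} [Field K] (v z : K) (A : ℕ → K)
    (hv : v ≠ 0) (hd : 1 + 3 * v + v ^ 2 ≠ 0)
    (hz : z = v / (1 + 3 * v + v ^ 2))
    (hA : ∀ h, 1 ≤ h → A h =
      z * (1 + v) * ((1 + 2 * v) ^ (h - 1) - v ^ h * (v + 2) ^ (h - 1)) /
        ((1 + 2 * v) ^ (h - 1) - v ^ (h + 1) * (v + 2) ^ (h - 1)))
    (hden : ∀ h, 1 ≤ h → (1 + 2 * v) ^ (h - 1) - v ^ (h + 1) * (v + 2) ^ (h - 1) ≠ 0)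
    (hone : ∀ h, 1 ≤ h → 1 - A h ≠ 0) :
    A 1 = z ∧ ∀ h, 1 ≤ h → A (h + 1) = -z + z * (2 - z) / (1 - A h) :=
  stmt6_general v z A hd hz hA hden
end

section
/- For h ≥ 2, the generating function p_h(z,t) defined by p_2 = z/(1-zt) and p_{h+1} = -z + z(2-z)/(1-p_h) equals z(1+v) * (1 - R v q^{h-2}) / (1 - R v^2 q^{h-2}), where z = v/(1+3v+v^2), q = v(v+2)/(1+2v), and R = (-v^2 + vt - 3v + t - 1)/(v^2 t - v^2 + vt - 3v - 1). -/
/-!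
With `z = v/(1+3v+v²)`, the Möbius map `p ↦ -z + z(2-z)/(1-p)` has the fixed points
`a = z(1+v)` and `b = a/v`, and its multiplier `(1-b)/(1-a)` is `q`. Hence the cross ratio
`(p_h - a)/(p_h - b)` is multiplied by `q` at each step; it equals `R v²` at `h = 2`, and solving
`(p_h - a)/(p_h - b) = R v² q^(h-2)` for `p_h` gives the closed form.
-/

section

variable {K : Type*} [Field K]

def closedForm (z v R w : K) : K :=
  z * (1 + v) * (1 - R * v * w) / (1 - R * v ^ 2 * w)

theorem closedForm_one {v t z R : K}
    (hd : 1 + 3 * v + v ^ 2 ≠ 0)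
    (hz : z = v / (1 + 3 * v + v ^ 2))
    (hRden : v ^ 2 * t - v ^ 2 + v * t - 3 * v - 1 ≠ 0)
    (hR : R = (-v ^ 2 + v * t - 3 * v + t - 1) / (v ^ 2 * t - v ^ 2 + v * t - 3 * v - 1))
    (hzt : 1 - z * t ≠ 0) (hden : 1 - R * v ^ 2 ≠ 0) :
    z / (1 - z * t) = closedForm z v R 1 := by
  have hRD : R * (v ^ 2 * t - v ^ 2 + v * t - 3 * v - 1) = -v ^ 2 + v * t - 3 * v + t - 1 := by
    rw [hR, div_mul_cancel₀ _ hRden]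
  rw [closedForm, mul_one, mul_one, div_eq_div_iff hzt hden]
  subst hz
  -- `field_simp` only finds side conditions stated in its own normal form
  rw [mul_comm 3 v] at hd
  field_simp
  linear_combination -v ^ 2 * hRD

theorem recurrence_closedForm {v z q R w : K}
    (hd : 1 + 3 * v + v ^ 2 ≠ 0) (h2v : 1 + 2 * v ≠ 0)
    (hz : z = v / (1 + 3 * v + v ^ 2))
    (hq : q = v * (v + 2) / (1 + 2 * v))
    (hw : 1 - R * v ^ 2 * w ≠ 0) (hwq : 1 - R * v ^ 2 * (w * q) ≠ 0)
    (hone : 1 - closedForm z v R w ≠ 0) :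
    -z + z * (2 - z) / (1 - closedForm z v R w) = closedForm z v R (w * q) := by
  have hnum : 1 - R * v ^ 2 * w - z * (1 + v) * (1 - R * v * w) ≠ 0 := by
    have := mul_ne_zero hone hw
    rwa [closedForm, one_sub_div hw, div_mul_cancel₀ _ hw] at this
  rw [closedForm, one_sub_div hw, div_div_eq_mul_div, add_div' _ _ _ hnum, closedForm,
    div_eq_div_iff hnum hwq]
  subst hz hq
  rw [mul_comm 3 v] at hd
  rw [mul_comm 2 v] at h2v
  field_simp
  ring

end

theorem stmt9_general {K : Type*} [Field K] (v t z q R : K) (p : ℕ → K)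
    (hd : 1 + 3 * v + v ^ 2 ≠ 0) (h2v : 1 + 2 * v ≠ 0)
    (hz : z = v / (1 + 3 * v + v ^ 2))
    (hq : q = v * (v + 2) / (1 + 2 * v))
    (hRden : v ^ 2 * t - v ^ 2 + v * t - 3 * v - 1 ≠ 0)
    (hR : R = (-v ^ 2 + v * t - 3 * v + t - 1) / (v ^ 2 * t - v ^ 2 + v * t - 3 * v - 1))
    (hzt : 1 - z * t ≠ 0)
    (hp2 : p 2 = z / (1 - z * t))
    (hpone : ∀ h, 2 ≤ h → 1 - p h ≠ 0)
    (hrec : ∀ h, 2 ≤ h → p (h + 1) = -z + z * (2 - z) / (1 - p h))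
    (hden : ∀ h, 2 ≤ h → 1 - R * v ^ 2 * q ^ (h - 2) ≠ 0) :
    ∀ h, 2 ≤ h →
      p h = z * (1 + v) * (1 - R * v * q ^ (h - 2)) / (1 - R * v ^ 2 * q ^ (h - 2)) := by
  intro h hh
  change p h = closedForm z v R (q ^ (h - 2))
  induction h, hh using Nat.le_induction with
  | base =>
    have hden2 : 1 - R * v ^ 2 ≠ 0 := by simpa using hden 2 le_rfl
    simpa [hp2] using closedForm_one hd hz hRden hR hzt hden2
  | succ h hh ih =>
    have hpow : q ^ (h + 1 - 2) = q ^ (h - 2) * q := by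
      rw [show h + 1 - 2 = h - 2 + 1 by omega, pow_succ]
    have hwq := hden (h + 1) (by omega)
    rw [hpow] at hwq
    rw [hrec h hh, ih, hpow]
    exact recurrence_closedForm hd h2v hz hq (hden h hh) hwq (ih ▸ hpone h hh)

/-- For `h ≥ 2`, the rational functions `p_h(z,t)` defined by `p₂ = z/(1-zt)`
and `p_{h+1} = -z + z(2-z)/(1-p_h)` equal
`z(1+v)(1 - R v q^{h-2})/(1 - R v² q^{h-2})`, where `z = v/(1+3v+v²)`,
`q = v(v+2)/(1+2v)` and `R = (-v²+vt-3v+t-1)/(v²t-v²+vt-3v-1)`. -/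
theorem stmt9 {K : Type*} [Field K] (v t z q R : K) (p : ℕ → K)
    (hv : v ≠ 0) (hd : 1 + 3 * v + v ^ 2 ≠ 0) (h2v : 1 + 2 * v ≠ 0)
    (hz : z = v / (1 + 3 * v + v ^ 2))
    (hq : q = v * (v + 2) / (1 + 2 * v))
    (hRden : v ^ 2 * t - v ^ 2 + v * t - 3 * v - 1 ≠ 0)
    (hR : R = (-v ^ 2 + v * t - 3 * v + t - 1) / (v ^ 2 * t - v ^ 2 + v * t - 3 * v - 1))
    (hzt : 1 - z * t ≠ 0)
    (hp2 : p 2 = z / (1 - z * t))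
    (hpone : ∀ h, 2 ≤ h → 1 - p h ≠ 0)
    (hrec : ∀ h, 2 ≤ h → p (h + 1) = -z + z * (2 - z) / (1 - p h))
    (hden : ∀ h, 2 ≤ h → 1 - R * v ^ 2 * q ^ (h - 2) ≠ 0) :
    ∀ h, 2 ≤ h →
      p h = z * (1 + v) * (1 - R * v * q ^ (h - 2)) / (1 - R * v ^ 2 * q ^ (h - 2)) :=
  stmt9_general v t z q R p hd h2v hz hq hRden hR hzt hp2 hpone hrec hden
end

section
/- The function F(v) = ((1-v^2)^2/((v+2)v(2v+1))) · (1/(2 log q) + 5/24), with q = v(v+2)/(1+2v), extends continuously to v = 1 and has Taylor expansion -((1-v)/3) - (2/27)(1-v)^2 + O((1-v)^3) as v → 1. -/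
set_option maxHeartbeats 1000000

open Filter Asymptotics

lemma polyQ18 (v : ℝ) (hv0 : (0:ℝ) < v) (h9 : 9/10 ≤ v) (h11 : v ≤ 11/10) :
    0 ≤ 162*v + 1689*v^2 + 7124*v^3 + 15592*v^4 + 18766*v^5 + 11931*v^6
        + 3236*v^7 - 52*v^8 - 128*v^9 ∧
    162*v + 1689*v^2 + 7124*v^3 + 15592*v^4 + 18766*v^5 + 11931*v^6
        + 3236*v^7 - 52*v^8 - 128*v^9
      ≤ 864*v^2 + 9504*v^3 + 43416*v^4 + 105840*v^5 + 146880*v^6 + 114048*v^7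
        + 44928*v^8 + 6912*v^9 := by
  have p1 := hv0
  have p2 := pow_pos hv0 2
  have p3 := pow_pos hv0 3
  have p4 := pow_pos hv0 4
  have p5 := pow_pos hv0 5
  have p6 := pow_pos hv0 6
  have p7 := pow_pos hv0 7
  have p8 := pow_pos hv0 8
  have e2 : 9/10*v ≤ v^2 := by nlinarith
  have e3 : 9/10*v^2 ≤ v^3 := by nlinarith
  have e4 : 9/10*v^3 ≤ v^4 := by nlinarith
  have e5 : 9/10*v^4 ≤ v^5 := by nlinarith
  have e6 : 9/10*v^5 ≤ v^6 := by nlinarith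
  have e7 : 9/10*v^6 ≤ v^7 := by nlinarith
  have e8 : 9/10*v^7 ≤ v^8 := by nlinarith
  have e9 : 9/10*v^8 ≤ v^9 := by nlinarith
  have u8 : v^8 ≤ 11/10*v^7 := by nlinarith
  have u9 : v^9 ≤ 11/10*v^8 := by nlinarith
  constructor <;> linarith

lemma polyB18 (v : ℝ) (hv0 : (0:ℝ) < v) (h9 : 9/10 ≤ v) (h11 : v ≤ 11/10) :
    |5*(1-v)*(1+v)^2/(12*((v+2)*v*(2*v+1))) + 2/3 + 4*(1-v)/27| ≤ 1 := by
  have hM : (0:ℝ) < 108*(v*(v+2)*(2*v+1)) := by positivity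
  have heq : 5*(1-v)*(1+v)^2/(12*((v+2)*v*(2*v+1))) + 2/3 + 4*(1-v)/27
      = (45*(1-v)*(1+v)^2 + 72*(v*(v+2)*(2*v+1)) + 16*(1-v)*(v*(v+2)*(2*v+1)))
        / (108*(v*(v+2)*(2*v+1))) := by
    field_simp; ring
  rw [heq, abs_div, abs_of_pos hM, div_le_one hM, abs_le]
  constructor <;> nlinarith

lemma ratId18 (v : ℝ) (hv0 : (0:ℝ) < v) (L : ℝ)
    (hL0 : L ≠ 0) (h9 : 9/10 ≤ v) (h11 : v ≤ 11/10) :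
    (1 - v ^ 2) ^ 2 / ((v + 2) * v * (2 * v + 1)) * (1 / (2 * L) + 5 / 24)
      - (-(1 - v) / 3 - 2 / 27 * (1 - v) ^ 2)
    = ((1-v)^4 * (162*v + 1689*v^2 + 7124*v^3 + 15592*v^4 + 18766*v^5 + 11931*v^6
        + 3236*v^7 - 52*v^8 - 128*v^9)
      / (864*v^2 + 9504*v^3 + 43416*v^4 + 105840*v^5 + 146880*v^6 + 114048*v^7
        + 44928*v^8 + 6912*v^9)
      + (1-v) * (5*(1-v)*(1+v)^2/(12*((v+2)*v*(2*v+1))) + 2/3 + 4*(1-v)/27)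
        * ((1 - v^2)/(1 + 2*v) + ((1 - v^2)/(1 + 2*v))^2/2 + L)) / (2 * L) := by
  have hne : v ≠ 0 := ne_of_gt hv0
  have h2 : v + 2 ≠ 0 := by linarith
  have h3 : 2*v + 1 ≠ 0 := by linarith
  have h4 : 1 + 2*v ≠ 0 := by linarith
  have h5 : (864*v^2 + 9504*v^3 + 43416*v^4 + 105840*v^5 + 146880*v^6 + 114048*v^7
        + 44928*v^8 + 6912*v^9) ≠ 0 := by positivity
  field_simp
  ring

lemma key18 (F : ℝ → ℝ)
    (hF : ∀ v : ℝ, F v =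
      (1 - v ^ 2) ^ 2 / ((v + 2) * v * (2 * v + 1)) *
        (1 / (2 * Real.log (v * (v + 2) / (1 + 2 * v))) + 5 / 24))
    (v : ℝ) (hv : |v - 1| ≤ 1/10) (hv1 : v ≠ 1) :
    |F v - (-(1 - v) / 3 - 2 / 27 * (1 - v) ^ 2)| ≤ 4 * |1 - v|^3 := by
  have h9 : 9/10 ≤ v := by cases abs_le.1 hv; linarith
  have h11 : v ≤ 11/10 := by cases abs_le.1 hv; linarith
  have hv0 : (0:ℝ) < v := by linarith
  have hp4 : (0:ℝ) < 1 + 2*v := by linarith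
  set t : ℝ := 1 - v with ht_def
  have ht0 : t ≠ 0 := sub_ne_zero.2 (Ne.symm hv1)
  have hta : |t| ≤ 1/10 := by rw [ht_def, abs_sub_comm]; exact hv
  have htpos : 0 < |t| := abs_pos.2 ht0
  set s : ℝ := (1 - v^2)/(1 + 2*v) with hs_def
  have hs_eq : s = t * ((1+v)/(1+2*v)) := by rw [hs_def, ht_def]; field_simp; ring
  have hfrac1 : (1+v)/(1+2*v) ≤ 3/4 := by rw [div_le_iff₀ hp4]; linarith
  have hfrac2 : 1/2 ≤ (1+v)/(1+2*v) := by rw [le_div_iff₀ hp4]; linarith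
  have hfrac0 : 0 ≤ (1+v)/(1+2*v) := by positivity
  have hs_ub : |s| ≤ 3/4 * |t| := by
    rw [hs_eq, abs_mul, abs_of_nonneg hfrac0]
    have := mul_le_mul_of_nonneg_left hfrac1 (abs_nonneg t)
    linarith
  have hs_lb : 1/2 * |t| ≤ |s| := by
    rw [hs_eq, abs_mul, abs_of_nonneg hfrac0]
    have := mul_le_mul_of_nonneg_left hfrac2 (abs_nonneg t)
    linarith
  have hs_small : |s| ≤ 3/40 := by linarith
  have hs1 : |s| < 1 := by linarith
  set L : ℝ := Real.log (1 - s) with hL_def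
  have hq : v * (v + 2) / (1 + 2 * v) = 1 - s := by
    rw [hs_def]; field_simp; ring
  have hX := Real.abs_log_sub_add_sum_range_le hs1 2
  have hsum : (∑ i ∈ Finset.range 2, s ^ (i + 1) / (i + 1)) = s + s^2/2 := by
    norm_num [Finset.sum_range_succ]
  rw [hsum] at hX
  set X : ℝ := s + s^2/2 + L with hX_def
  have hcube : (3/4*|t|)^3 = 27/64 * |t|^3 := by ring
  have hs3 : |s|^3 ≤ 27/64 * |t|^3 := by
    have := pow_le_pow_left₀ (abs_nonneg s) hs_ub 3
    linarith [hcube ▸ this]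
  have hXb : |X| ≤ 2 * |s|^3 := by
    have h1 : (1:ℝ)/2 ≤ 1 - |s| := by linarith
    have h2 : |s|^3 / (1 - |s|) ≤ |s|^3 / (1/2) :=
      div_le_div_of_nonneg_left (by positivity) (by norm_num) h1
    calc |X| ≤ |s|^3 / (1 - |s|) := hX
      _ ≤ |s|^3 / (1/2) := h2
      _ = 2 * |s|^3 := by ring
  have hXt : |X| ≤ |t|^3 := by linarith [pow_nonneg (abs_nonneg t) 3]
  have hL_lb : |t|/4 ≤ |L| := by
    have h1 : |s + s^2/2| - |X| ≤ |L| := by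
      have h := abs_sub_abs_le_abs_sub (s + s^2/2) X
      rw [show s + s^2/2 - X = -L by rw [hX_def]; ring, abs_neg] at h
      linarith
    have h2 : |s| - |s^2/2| ≤ |s + s^2/2| := by
      have h := abs_sub_abs_le_abs_sub s (-(s^2/2))
      simp only [sub_neg_eq_add, abs_neg] at h
      linarith
    have h3 : |s^2/2| = |s|^2/2 := by rw [abs_div, sq_abs]; norm_num
    have h4 : |s|^2 ≤ 3/40 * |s| := by
      rw [sq]; exact mul_le_mul_of_nonneg_right hs_small (abs_nonneg s)
    have h6 : |s|^3 ≤ 3/40 * |s|^2 := by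
      rw [pow_succ]
      have := mul_le_mul_of_nonneg_left hs_small (sq_nonneg |s|)
      rw [sq_abs] at this ⊢
      linarith [sq_abs s]
    linarith
  have hL0 : L ≠ 0 := by
    intro h; rw [h, abs_zero] at hL_lb; linarith
  set Br : ℝ := 5*(1-v)*(1+v)^2/(12*((v+2)*v*(2*v+1))) + 2/3 + 4*(1-v)/27 with hBr_def
  have hBr_bound : |Br| ≤ 1 := polyB18 v hv0 h9 h11
  set Q : ℝ := 162*v + 1689*v^2 + 7124*v^3 + 15592*v^4 + 18766*v^5 + 11931*v^6
        + 3236*v^7 - 52*v^8 - 128*v^9 with hQ_def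
  set D : ℝ := 864*v^2 + 9504*v^3 + 43416*v^4 + 105840*v^5 + 146880*v^6 + 114048*v^7
        + 44928*v^8 + 6912*v^9 with hD_def
  have hDen : (0:ℝ) < D := by rw [hD_def]; positivity
  have hQ_bounds : 0 ≤ Q ∧ Q ≤ D := polyQ18 v hv0 h9 h11
  have hFP : F v - (-(1 - v) / 3 - 2 / 27 * (1 - v) ^ 2)
      = (t^4 * Q / D + t * Br * X) / (2 * L) := by
    rw [hF v, hq, ← hL_def]
    rw [hQ_def, hD_def, hBr_def, hX_def, hs_def, ht_def]
    exact ratId18 v hv0 L hL0 h9 h11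
  rw [hFP]
  have hnum : |t^4 * Q / D + t * Br * X| ≤ 2 * |t|^4 := by
    have h1 : |t^4 * Q / D| ≤ |t|^4 := by
      rw [abs_div, abs_mul, abs_of_pos hDen, abs_pow, div_le_iff₀ hDen,
        abs_of_nonneg hQ_bounds.1]
      exact le_trans (mul_le_mul_of_nonneg_left hQ_bounds.2 (by positivity)) le_rfl
    have h2 : |t * Br * X| ≤ |t|^4 := by
      rw [abs_mul, abs_mul]
      calc |t| * |Br| * |X| ≤ |t| * 1 * |t|^3 :=
            mul_le_mul (mul_le_mul_of_nonneg_left hBr_bound (abs_nonneg t)) hXt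
              (abs_nonneg X) (by positivity)
        _ = |t|^4 := by ring
    calc |t^4 * Q / D + t * Br * X| ≤ |t^4 * Q / D| + |t * Br * X| := abs_add_le _ _
      _ ≤ 2 * |t|^4 := by linarith
  rw [abs_div, abs_mul, abs_of_nonneg (by norm_num : (0:ℝ) ≤ 2)]
  have hden_lb : |t|/2 ≤ 2 * |L| := by linarith
  calc |t^4 * Q / D + t * Br * X| / (2 * |L|)
      ≤ (2 * |t|^4) / (|t|/2) :=
        div_le_div₀ (by positivity) hnum (by positivity) hden_lb
    _ = 4 * |t|^3 := by field_simp; ring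

/-- The function `F(v) = ((1-v²)²/((v+2)v(2v+1)))·(1/(2 log q) + 5/24)` with
`q = v(v+2)/(1+2v)` extends continuously to `v = 1`, with Taylor expansion
`-(1-v)/3 - (2/27)(1-v)² + O((1-v)³)` as `v → 1`. -/
theorem stmt18 (F : ℝ → ℝ)
    (hF : ∀ v : ℝ, F v =
      (1 - v ^ 2) ^ 2 / ((v + 2) * v * (2 * v + 1)) *
        (1 / (2 * Real.log (v * (v + 2) / (1 + 2 * v))) + 5 / 24)) :
    ∃ G : ℝ → ℝ, ContinuousAt G 1 ∧
      (∀ᶠ v in nhdsWithin (1 : ℝ) {(1 : ℝ)}ᶜ, G v = F v) ∧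
      (fun v : ℝ => G v - (-(1 - v) / 3 - 2 / 27 * (1 - v) ^ 2))
        =O[nhds (1 : ℝ)] fun v : ℝ => (1 - v) ^ 3 := by
  set G : ℝ → ℝ := fun v => if v = 1 then 0 else F v with hG_def
  have hGbound : ∀ v : ℝ, |v - 1| ≤ 1/10 →
      |G v - (-(1 - v) / 3 - 2 / 27 * (1 - v) ^ 2)| ≤ 4 * |1 - v|^3 := by
    intro v hv
    by_cases hv1 : v = 1
    · subst hv1; simp [hG_def]
    · have := key18 F hF v hv hv1
      simpa [hG_def, hv1] using this
  refine ⟨G, ?_, ?_, ?_⟩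
  · -- continuity at 1
    have hG1 : G 1 = 0 := by simp [hG_def]
    rw [ContinuousAt, hG1]
    have hP : Tendsto (fun v : ℝ => -(1 - v) / 3 - 2 / 27 * (1 - v) ^ 2) (nhds 1) (nhds 0) := by
      have : Continuous (fun v : ℝ => -(1 - v) / 3 - 2 / 27 * (1 - v) ^ 2) := by continuity
      simpa using this.tendsto 1
    have hdiff : Tendsto (fun v : ℝ => G v - (-(1 - v) / 3 - 2 / 27 * (1 - v) ^ 2))
        (nhds 1) (nhds 0) := by
      refine squeeze_zero_norm' (a := fun v : ℝ => 4 * |1 - v|^3) ?_ ?_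
      · filter_upwards [Metric.closedBall_mem_nhds (1:ℝ) (by norm_num : (0:ℝ) < 1/10)]
          with v hv
        rw [Metric.mem_closedBall, Real.dist_eq] at hv
        simpa [Real.norm_eq_abs] using hGbound v hv
      · have hc : Continuous (fun v : ℝ => 4 * |1 - v|^3) := by
          continuity
        simpa using hc.tendsto 1
    have := hdiff.add hP
    simpa using this
  · filter_upwards [self_mem_nhdsWithin] with v hv
    simp only [Set.mem_compl_iff, Set.mem_singleton_iff] at hv
    simp [hG_def, hv]
  · rw [isBigO_iff]
    refine ⟨4, ?_⟩
    filter_upwards [Metric.closedBall_mem_nhds (1:ℝ) (by norm_num : (0:ℝ) < 1/10)]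
      with v hv
    rw [Metric.mem_closedBall, Real.dist_eq] at hv
    have h := hGbound v hv
    rw [Real.norm_eq_abs, Real.norm_eq_abs]
    calc |G v - (-(1 - v) / 3 - 2 / 27 * (1 - v) ^ 2)| ≤ 4 * |1 - v|^3 := h
      _ = 4 * |(1 - v)^3| := by rw [abs_pow]
end
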